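/- Let A be a graded-commutative Z/2-algebra and let w = 1 + w_1 + w_2 + ... and v = 1 + v_1 + v_2 + ... be elements with w_i, v_i in degree i, related by w = Sq(v) where Sq = Σ_i Sq^i is a ring endomorphism of A built from operations Sq^i raising degree by i satisfying Sq^{2i+1} = Sq^1 Sq^{2i}, Sq^1 Sq^1 = 0, and Sq^i(x) = 0 whenever i > deg(x). Suppose additionally that v_j = 0 for all j > 2k. Then w_1 · w_{4k−2} = Sq^1(w_{4k−2}) + w_{4k−1} implies w_1 · w_{4k−2} = 0, provided also that Sq^1(w_{4k−2}) + w_{4k−1} can be expanded via w_d = Σ_{i} Sq^i(v_{d−i}). -/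

import Mathlib

/-!
Write `w_d = ∑ᵢ Sq^i(v_{d-i})`. Since `v_j = 0` for `j > 2k` and `Sq^i v_j = 0` for `i > j`, only
the terms with `d - 2k ≤ i ≤ d / 2` survive, so with `n = 2k - 2`
`w_{4k-1} = Sq^{n+1} v_{n+2}` and `w_{4k-2} = Sq^n v_{n+2} + Sq^{n+1} v_{n+1}`.
As `n` is even, `Sq^1 Sq^n = Sq^{n+1}` and `Sq^1 Sq^{n+1} = Sq^1 Sq^1 Sq^n = 0`, hence
`Sq^1 w_{4k-2} = w_{4k-1}`, and the right-hand side of the Wu relation vanishes in characteristic 2.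
-/

open Finset

section TotalSquare

variable {R A : Type*} [CommSemiring R] [AddCommMonoid A] [Module R A]
  (Sq : ℕ → A →ₗ[R] A) (v : ℕ → A)

def totalSqComponent (d : ℕ) : A :=
  ∑ i ∈ range (d + 1), Sq i (v (d - i))

variable {Sq v}

theorem totalSqComponent_eq_sum_Icc {N : ℕ} (hv : ∀ j, N < j → v j = 0)
    (hSqv : ∀ i j, j < i → Sq i (v j) = 0) (d : ℕ) :
    totalSqComponent Sq v d = ∑ i ∈ Icc (d - N) (d / 2), Sq i (v (d - i)) := by
  symm
  apply sum_subset
  · intro i hi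
    rw [mem_Icc] at hi
    rw [mem_range]
    omega
  · intro i hi hni
    rw [mem_range] at hi
    rw [mem_Icc, not_and_or] at hni
    rcases hni with hlow | hhigh
    · rw [hv _ (by omega), map_zero]
    · exact hSqv _ _ (by omega)

theorem totalSqComponent_two_mul_add_one {n : ℕ} (hv : ∀ j, n + 1 < j → v j = 0)
    (hSqv : ∀ i j, j < i → Sq i (v j) = 0) :
    totalSqComponent Sq v (2 * n + 1) = Sq n (v (n + 1)) := by
  rw [totalSqComponent_eq_sum_Icc hv hSqv,
    show 2 * n + 1 - (n + 1) = n by omega, show (2 * n + 1) / 2 = n by omega,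
    Icc_self, sum_singleton, show 2 * n + 1 - n = n + 1 by omega]

theorem totalSqComponent_two_mul_add_two {n : ℕ} (hv : ∀ j, n + 2 < j → v j = 0)
    (hSqv : ∀ i j, j < i → Sq i (v j) = 0) :
    totalSqComponent Sq v (2 * n + 2) = Sq n (v (n + 2)) + Sq (n + 1) (v (n + 1)) := by
  rw [totalSqComponent_eq_sum_Icc hv hSqv,
    show 2 * n + 2 - (n + 2) = n by omega, show (2 * n + 2) / 2 = n + 1 by omega,
    sum_Icc_succ_top (by omega), Icc_self, sum_singleton,
    show 2 * n + 2 - n = n + 2 by omega, show 2 * n + 2 - (n + 1) = n + 1 by omega]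

end TotalSquare

section SteenrodRelations

variable {A : Type*} [AddCommGroup A] [Module (ZMod 2) A] {Sq : ℕ → A →ₗ[ZMod 2] A}

theorem sq_one_add_totalSqComponent_eq_zero {m : ℕ} {v : ℕ → A}
    (hodd : ∀ (i : ℕ) (x : A), Sq (2 * i + 1) x = Sq 1 (Sq (2 * i) x))
    (hsq1 : ∀ x : A, Sq 1 (Sq 1 x) = 0)
    (hv : ∀ j, 2 * m + 2 < j → v j = 0) (hSqv : ∀ i j, j < i → Sq i (v j) = 0) :
    Sq 1 (totalSqComponent Sq v (4 * m + 2)) + totalSqComponent Sq v (4 * m + 3) = 0 := by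
  have hw2 := totalSqComponent_two_mul_add_two (n := 2 * m) hv hSqv
  have hw3 := totalSqComponent_two_mul_add_one (n := 2 * m + 1) hv hSqv
  rw [show 2 * (2 * m) + 2 = 4 * m + 2 by ring] at hw2
  rw [show 2 * (2 * m + 1) + 1 = 4 * m + 3 by ring] at hw3
  have hsq1_odd : Sq 1 (Sq (2 * m + 1) (v (2 * m + 1))) = 0 := by rw [hodd, hsq1]
  rw [hw2, hw3, map_add, ← hodd, hsq1_odd, add_zero, ← two_smul (ZMod 2),
    show (2 : ZMod 2) = 0 from rfl, zero_smul]

end SteenrodRelations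

theorem stmt7 {A : Type*} [CommRing A] [Algebra (ZMod 2) A]
    (k : ℕ) (hk : 1 ≤ k)
    (Sq : ℕ → A →ₗ[ZMod 2] A) (w v : ℕ → A)
    (hodd : ∀ (i : ℕ) (x : A), Sq (2 * i + 1) x = Sq 1 (Sq (2 * i) x))
    (hsq1 : ∀ x : A, Sq 1 (Sq 1 x) = 0)
    (hw : ∀ d, w d = ∑ i ∈ Finset.range (d + 1), Sq i (v (d - i)))
    (hv : ∀ j, 2 * k < j → v j = 0)
    (hSqv : ∀ i j, j < i → Sq i (v j) = 0)
    (hwu : w 1 * w (4 * k - 2) = Sq 1 (w (4 * k - 2)) + w (4 * k - 1)) :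
    w 1 * w (4 * k - 2) = 0 := by
  obtain rfl : w = totalSqComponent Sq v := funext hw
  obtain ⟨m, rfl⟩ : ∃ m, k = m + 1 := ⟨k - 1, by omega⟩
  rw [hwu, show 4 * (m + 1) - 2 = 4 * m + 2 by omega, show 4 * (m + 1) - 1 = 4 * m + 3 by omega]
  exact sq_one_add_totalSqComponent_eq_zero hodd hsq1 hv hSqv
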